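/- Let c > 1 be an irrational real number, set q = ⌊c⌋, and let k be a positive integer. Define f(n) = ⌊(n+1)/c⌋ − ⌊n/c⌋ and g(n) = ⌊{c}(n+1)⌋ − ⌊{c}·n⌋ for positive integers n, and set c'_n = ⌊n/c⌋. There exists a constant C > 0 such that for every positive integer m, with x = ⌊m·c⌋, one has | Σ_{n=1}^x ( k·q·f(n) + Σ_{j=1}^k f(n)·g(⌊n/c⌋ + j + 1) )/n − Σ_{j=1}^k ( 1 + log m + log c + γ + {{c}(j+1)} − Σ_{n=1}^∞ ( c·{c⁻¹(n+1)} + {{c}(c'_{n+1} + j + 1)} ) / (n(n+1)) ) | ≤ C·k/m, where γ is Euler's constant and each infinite series converges. -/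

import Mathlib

open Real

private lemma tele_sum (A : ℝ) (hA : 1 ≤ A) (N : ℕ) :
    ∑ n ∈ Finset.range N, (1:ℝ) / (((n:ℝ) + A) * ((n:ℝ) + A + 1)) = 1/A - 1/((N:ℝ) + A) := by
  induction N with
  | zero => simp
  | succ N ih =>
    rw [Finset.sum_range_succ, ih]
    have h1 : (0:ℝ) < (N:ℝ) + A := by have := Nat.cast_nonneg (α := ℝ) N; linarith
    have h2 : (0:ℝ) < (N:ℝ) + A + 1 := by linarith
    push_cast
    field_simp
    ring

private lemma base_summable (A : ℝ) (hA : 1 ≤ A) :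
    Summable (fun n : ℕ => (1:ℝ) / (((n:ℝ) + A) * ((n:ℝ) + A + 1))) := by
  apply summable_of_sum_range_le (c := 1/A)
  · intro n
    have h1 : (0:ℝ) < (n:ℝ) + A := by have := Nat.cast_nonneg (α := ℝ) n; linarith
    positivity
  · intro N
    rw [tele_sum A hA N]
    have h1 : (0:ℝ) < (N:ℝ) + A := by have := Nat.cast_nonneg (α := ℝ) N; linarith
    have : 0 ≤ 1/((N:ℝ)+A) := by positivity
    linarith

private lemma base_tsum_le (A : ℝ) (hA : 1 ≤ A) :
    ∑' n : ℕ, (1:ℝ) / (((n:ℝ) + A) * ((n:ℝ) + A + 1)) ≤ 1/A := by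
  apply Real.tsum_le_of_sum_range_le
  · intro n
    have h1 : (0:ℝ) < (n:ℝ) + A := by have := Nat.cast_nonneg (α := ℝ) n; linarith
    positivity
  · intro N
    rw [tele_sum A hA N]
    have h1 : (0:ℝ) < (N:ℝ) + A := by have := Nat.cast_nonneg (α := ℝ) N; linarith
    have : 0 ≤ 1/((N:ℝ)+A) := by positivity
    linarith

private lemma abel_sum (u : ℕ → ℝ) (y : ℕ) :
    ∑ n ∈ Finset.Icc 1 (y+1), (u n - u (n+1)) / (n:ℝ)
      = u 1 - u (y+2)/((y:ℝ)+1)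
        - ∑ n ∈ Finset.range y, u (n+2) / (((n:ℝ)+1)*((n:ℝ)+2)) := by
  induction y with
  | zero => norm_num
  | succ y ih =>
    rw [show y+1+1 = (y+1)+1 from rfl, Finset.sum_Icc_succ_top (by omega : 1 ≤ y+1+1), ih,
      Finset.sum_range_succ]
    have h1 : ((y:ℝ)+1) ≠ 0 := by positivity
    have h2 : ((y:ℝ)+2) ≠ 0 := by positivity
    push_cast
    field_simp
    ring

private lemma harm_eq (x : ℕ) :
    ∑ n ∈ Finset.Icc 1 x, (1:ℝ)/(n:ℝ) = (harmonic x : ℝ) := by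
  induction x with
  | zero => simp
  | succ x ih =>
    rw [Finset.sum_Icc_succ_top (by omega : 1 ≤ x+1), ih, harmonic_succ]
    push_cast
    ring

private lemma euler_bound (x : ℕ) (hx : 1 ≤ x) :
    |(harmonic x : ℝ) - Real.log x - Real.eulerMascheroniConstant| ≤ 1/(x:ℝ) := by
  have hx0 : (0:ℝ) < (x:ℝ) := by exact_mod_cast hx
  have h1 := Real.eulerMascheroniSeq_lt_eulerMascheroniConstant x
  have h2 := Real.eulerMascheroniConstant_lt_eulerMascheroniSeq' x
  rw [Real.eulerMascheroniSeq] at h1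
  rw [Real.eulerMascheroniSeq', if_neg (by omega)] at h2
  have hlog : Real.log ((x:ℝ)+1) - Real.log x ≤ 1/(x:ℝ) := by
    rw [← Real.log_div (by positivity) (by positivity)]
    have h3 := Real.log_le_sub_one_of_pos (show (0:ℝ) < ((x:ℝ)+1)/x by positivity)
    have h4 : ((x:ℝ)+1)/x - 1 = 1/x := by field_simp; ring
    linarith
  rw [abs_le]
  constructor
  · have : (0:ℝ) < 1/(x:ℝ) := by positivity
    linarith
  · linarith

private noncomputable def rho (c : ℝ) (j : ℕ) (s : ℕ) : ℝ :=
  c * Int.fract ((s:ℝ)/c) + Int.fract (Int.fract c * ((⌊(s:ℝ)/c⌋ : ℝ) + (j:ℝ) + 1))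

private noncomputable def psi (c : ℝ) (q : ℤ) (j : ℕ) (s : ℕ) : ℤ :=
  q * ⌊(s:ℝ)/c⌋ + ⌊Int.fract c * ((⌊(s:ℝ)/c⌋ : ℝ) + (j:ℝ) + 1)⌋

private lemma rho_nonneg {c : ℝ} (hc : 0 < c) (j s : ℕ) : 0 ≤ rho c j s := by
  unfold rho
  have h1 := Int.fract_nonneg ((s:ℝ)/c)
  have h2 := Int.fract_nonneg (Int.fract c * ((⌊(s:ℝ)/c⌋ : ℝ) + (j:ℝ) + 1))
  nlinarith

private lemma rho_le {c : ℝ} (hc : 0 < c) (j s : ℕ) : rho c j s ≤ c + 1 := by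
  unfold rho
  have h1 := Int.fract_lt_one ((s:ℝ)/c)
  have h2 := (Int.fract_lt_one (Int.fract c * ((⌊(s:ℝ)/c⌋ : ℝ) + (j:ℝ) + 1))).le
  have h3 := Int.fract_nonneg ((s:ℝ)/c)
  nlinarith

private lemma psi_real (c : ℝ) (q : ℤ) (hq : q = ⌊c⌋) (hc : c ≠ 0) (j s : ℕ) :
    ((psi c q j s : ℤ) : ℝ) = (s:ℝ) + Int.fract c * ((j:ℝ)+1) - rho c j s := by
  unfold psi rho
  have hqc : (q:ℝ) = c - Int.fract c := by
    rw [hq]; linarith [Int.floor_add_fract c]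
  have hfl : (⌊Int.fract c * ((⌊(s:ℝ)/c⌋ : ℝ) + (j:ℝ) + 1)⌋ : ℝ)
      = Int.fract c * ((⌊(s:ℝ)/c⌋ : ℝ) + (j:ℝ) + 1)
        - Int.fract (Int.fract c * ((⌊(s:ℝ)/c⌋ : ℝ) + (j:ℝ) + 1)) := by
    linarith [Int.floor_add_fract (Int.fract c * ((⌊(s:ℝ)/c⌋ : ℝ) + (j:ℝ) + 1))]
  have h := Int.floor_add_fract ((s:ℝ)/c)
  have h2 : c * ((s:ℝ)/c) = (s:ℝ) := by field_simp
  have hcA : c * (⌊(s:ℝ)/c⌋ : ℝ) = (s:ℝ) - c * Int.fract ((s:ℝ)/c) := by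
    linear_combination c * h + h2
  push_cast
  linear_combination (⌊(s:ℝ)/c⌋ : ℝ) * hqc + hfl + hcA

private lemma rho_one {c : ℝ} (hc1 : 1 < c) (j : ℕ) :
    rho c j 1 = 1 + Int.fract (Int.fract c * ((j:ℝ)+1)) := by
  have hc0 : (0:ℝ) < c := by linarith
  have h01 : (0:ℝ) ≤ 1/c := by positivity
  have h11 : 1/c < 1 := by rw [div_lt_one hc0]; linarith
  have hfloor : ⌊((1:ℕ):ℝ)/c⌋ = 0 := by
    rw [Nat.cast_one]
    exact Int.floor_eq_zero_iff.mpr ⟨by positivity, h11⟩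
  unfold rho
  rw [hfloor]
  have hfr : Int.fract (((1:ℕ):ℝ)/c) = 1/c := by
    rw [Nat.cast_one]
    exact Int.fract_eq_self.mpr ⟨h01, h11⟩
  rw [hfr]
  rw [mul_one_div, div_self (by linarith)]
  norm_num

private lemma step_eq (c : ℝ) (hc1 : 1 < c) (q : ℤ)
    (f g : ℤ → ℤ)
    (hf : ∀ n : ℤ, 0 < n → f n = ⌊((n : ℝ) + 1) / c⌋ - ⌊(n : ℝ) / c⌋)
    (hg : ∀ n : ℤ, 0 < n → g n = ⌊Int.fract c * ((n : ℝ) + 1)⌋ - ⌊Int.fract c * (n : ℝ)⌋)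
    (j n : ℕ) (hj : 1 ≤ j) (hn : 1 ≤ n) :
    q * f (n:ℤ) + f (n:ℤ) * g (⌊((n:ℕ):ℝ)/c⌋ + (j:ℤ) + 1)
      = psi c q j (n+1) - psi c q j n := by
  have hc0 : (0:ℝ) < c := by linarith
  have hn0 : (0:ℝ) ≤ (n:ℝ) := Nat.cast_nonneg n
  have hA0 : 0 ≤ ⌊(n:ℝ)/c⌋ := Int.floor_nonneg.mpr (by positivity)
  have hj' : (1:ℤ) ≤ (j:ℤ) := by exact_mod_cast hj
  have hfn : f (n:ℤ) = ⌊((n:ℝ)+1)/c⌋ - ⌊(n:ℝ)/c⌋ := by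
    have h := hf (n:ℤ) (by exact_mod_cast hn)
    push_cast at h
    exact h
  have hmono : ⌊(n:ℝ)/c⌋ ≤ ⌊((n:ℝ)+1)/c⌋ := Int.floor_le_floor (by gcongr <;> linarith)
  have hup : ⌊((n:ℝ)+1)/c⌋ ≤ ⌊(n:ℝ)/c⌋ + 1 := by
    have h1 : ((n:ℝ)+1)/c ≤ (n:ℝ)/c + 1 := by
      rw [add_div]
      have h2 : 1/c ≤ 1 := by rw [div_le_one hc0]; linarith
      linarith
    calc ⌊((n:ℝ)+1)/c⌋ ≤ ⌊(n:ℝ)/c + 1⌋ := Int.floor_le_floor h1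
      _ = ⌊(n:ℝ)/c⌋ + 1 := by
          exact_mod_cast Int.floor_add_intCast ((n:ℝ)/c) 1
  have hcast : ((n+1:ℕ):ℝ) = (n:ℝ)+1 := by push_cast; ring
  unfold psi
  rw [hcast]
  rcases (by omega : ⌊((n:ℝ)+1)/c⌋ = ⌊(n:ℝ)/c⌋ ∨ ⌊((n:ℝ)+1)/c⌋ = ⌊(n:ℝ)/c⌋+1) with hB | hB
  · have hf0 : f (n:ℤ) = 0 := by omega
    rw [hf0, hB]
    ring
  · have hf1 : f (n:ℤ) = 1 := by omega
    have hgval := hg (⌊(n:ℝ)/c⌋ + (j:ℤ) + 1) (by omega)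
    rw [hf1, hB, hgval]
    have harg1 : ((⌊(n:ℝ)/c⌋ + (j:ℤ) + 1 : ℤ):ℝ) + 1
        = ((⌊(n:ℝ)/c⌋ + 1 : ℤ):ℝ) + (j:ℝ) + 1 := by push_cast; ring
    have harg2 : ((⌊(n:ℝ)/c⌋ + (j:ℤ) + 1 : ℤ):ℝ)
        = (⌊(n:ℝ)/c⌋:ℝ) + (j:ℝ) + 1 := by push_cast; ring
    rw [harg1, harg2]
    ring


/-- For irrational `c > 1`, `q = ⌊c⌋` and a positive integer `k`, with
`f(n) = ⌊(n+1)/c⌋ − ⌊n/c⌋`, `g(n) = ⌊{c}(n+1)⌋ − ⌊{c}·n⌋` and `c'ₙ = ⌊n/c⌋`, there is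
`C > 0` such that for every positive integer `m`, with `x = ⌊m·c⌋`,
`| Σ_{n=1}^x (k·q·f(n) + Σ_{j=1}^k f(n)·g(⌊n/c⌋+j+1))/n
  − Σ_{j=1}^k ( 1 + log m + log c + γ + {{c}(j+1)}
      − Σ_{n≥1} ( c{c⁻¹(n+1)} + {{c}(c'_{n+1}+j+1)} )/(n(n+1)) ) | ≤ C·k/m`,
where each inner infinite series converges. -/
theorem stmt15 (c : ℝ) (hc : Irrational c) (hc1 : 1 < c)
    (q : ℤ) (hq : q = ⌊c⌋) (k : ℕ) (hk : 0 < k)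
    (f g : ℤ → ℤ)
    (hf : ∀ n : ℤ, 0 < n → f n = ⌊((n : ℝ) + 1) / c⌋ - ⌊(n : ℝ) / c⌋)
    (hg : ∀ n : ℤ, 0 < n → g n = ⌊Int.fract c * ((n : ℝ) + 1)⌋ - ⌊Int.fract c * (n : ℝ)⌋) :
    (∀ j ∈ Finset.Icc 1 k,
      Summable (fun n : ℕ =>
        (c * Int.fract (c⁻¹ * ((n : ℝ) + 2))
          + Int.fract (Int.fract c * ((⌊((n : ℝ) + 2) / c⌋ : ℝ) + (j : ℝ) + 1)))
          / (((n : ℝ) + 1) * ((n : ℝ) + 2)))) ∧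
    ∃ C : ℝ, 0 < C ∧ ∀ m : ℕ, 0 < m →
      |(∑ n ∈ Finset.Icc 1 ⌊(m : ℝ) * c⌋.toNat,
            (((k : ℤ) * q * f n
              + ∑ j ∈ Finset.Icc 1 k, f n * g (⌊(n : ℝ) / c⌋ + j + 1) : ℤ) : ℝ) / (n : ℝ))
        - ∑ j ∈ Finset.Icc 1 k,
            (1 + Real.log m + Real.log c + Real.eulerMascheroniConstant
              + Int.fract (Int.fract c * ((j : ℝ) + 1))
              - ∑' n : ℕ,
                  (c * Int.fract (c⁻¹ * ((n : ℝ) + 2))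
                    + Int.fract (Int.fract c * ((⌊((n : ℝ) + 2) / c⌋ : ℝ) + (j : ℝ) + 1)))
                    / (((n : ℝ) + 1) * ((n : ℝ) + 2)))|
        ≤ C * k / m := by
  have hc0 : (0:ℝ) < c := by linarith
  have hcne : c ≠ 0 := ne_of_gt hc0
  -- rewrite the statement's series term in terms of rho
  have hFeq : ∀ j : ℕ,
      (fun n : ℕ =>
        (c * Int.fract (c⁻¹ * ((n : ℝ) + 2))
          + Int.fract (Int.fract c * ((⌊((n : ℝ) + 2) / c⌋ : ℝ) + (j : ℝ) + 1)))
          / (((n : ℝ) + 1) * ((n : ℝ) + 2)))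
      = fun n : ℕ => rho c j (n+2) / (((n:ℝ)+1) * ((n:ℝ)+2)) := by
    intro j
    funext n
    unfold rho
    have hn2 : ((n+2:ℕ):ℝ) = (n:ℝ)+2 := by push_cast; ring
    rw [hn2, inv_mul_eq_div]
  have hsummable : ∀ j : ℕ,
      Summable (fun n : ℕ => rho c j (n+2) / (((n:ℝ)+1) * ((n:ℝ)+2))) := by
    intro j
    apply Summable.of_nonneg_of_le
      (f := fun n : ℕ => (c+1) * ((1:ℝ)/(((n:ℝ)+1)*((n:ℝ)+1+1))))
    · intro n
      exact div_nonneg (rho_nonneg hc0 _ _) (by positivity)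
    · intro n
      have hd : ((n:ℝ)+1)*((n:ℝ)+1+1) = ((n:ℝ)+1)*((n:ℝ)+2) := by ring
      rw [mul_one_div, hd]
      gcongr
      exact rho_le hc0 _ _
    · exact (base_summable 1 le_rfl).mul_left (c+1)
  constructor
  · intro j _
    rw [hFeq j]
    exact hsummable j
  refine ⟨2*c+4, by linarith, ?_⟩
  intro m hm
  have hm0 : (0:ℝ) < (m:ℝ) := by exact_mod_cast hm
  have hfl0 : 0 ≤ ⌊(m:ℝ)*c⌋ := Int.floor_nonneg.mpr (by positivity)
  have hmle : (m:ℤ) ≤ ⌊(m:ℝ)*c⌋ := Int.le_floor.mpr (by push_cast; nlinarith)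
  obtain ⟨y, hxy⟩ : ∃ y, ⌊(m:ℝ)*c⌋.toNat = y + 1 := ⟨⌊(m:ℝ)*c⌋.toNat - 1, by omega⟩
  have hfly : ⌊(m:ℝ)*c⌋ = (y:ℤ) + 1 := by omega
  have hylemc : ((y:ℝ)+1) ≤ (m:ℝ)*c := by
    have h := Int.floor_le ((m:ℝ)*c)
    rw [hfly] at h
    push_cast at h
    linarith
  have hmcy : (m:ℝ)*c ≤ (y:ℝ)+2 := by
    have h := Int.lt_floor_add_one ((m:ℝ)*c)
    rw [hfly] at h
    push_cast at h
    linarith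
  have hmy : (m:ℝ) ≤ (y:ℝ)+1 := by
    have h : (m:ℤ) ≤ (y:ℤ)+1 := hfly ▸ hmle
    exact_mod_cast h
  have hy1 : (0:ℝ) < (y:ℝ)+1 := by positivity
  -- numerator rewrite
  have hnum : ∀ n : ℕ,
      ((k:ℤ) * q * f (n:ℤ) + ∑ j ∈ Finset.Icc 1 k, f (n:ℤ) * g (⌊(n:ℝ)/c⌋ + (j:ℤ) + 1))
      = ∑ j ∈ Finset.Icc 1 k, (q * f (n:ℤ) + f (n:ℤ) * g (⌊(n:ℝ)/c⌋ + (j:ℤ) + 1)) := by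
    intro n
    rw [Finset.sum_add_distrib, Finset.sum_const, Nat.card_Icc, Nat.add_sub_cancel,
      nsmul_eq_mul]
    push_cast
    ring
  have hLHS : (∑ n ∈ Finset.Icc 1 (y+1),
        (((k:ℤ) * q * f (n:ℤ)
          + ∑ j ∈ Finset.Icc 1 k, f (n:ℤ) * g (⌊(n:ℝ)/c⌋ + (j:ℤ) + 1) : ℤ) : ℝ) / (n:ℝ))
      = ∑ j ∈ Finset.Icc 1 k, ∑ n ∈ Finset.Icc 1 (y+1),
          ((q * f (n:ℤ) + f (n:ℤ) * g (⌊(n:ℝ)/c⌋ + (j:ℤ) + 1) : ℤ) : ℝ) / (n:ℝ) := by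
    rw [← Finset.sum_comm]
    apply Finset.sum_congr rfl
    intro n _
    rw [hnum n, Int.cast_sum, Finset.sum_div]
  -- per-j exact identity
  have hperj : ∀ j ∈ Finset.Icc 1 k,
      (∑ n ∈ Finset.Icc 1 (y+1),
        ((q * f (n:ℤ) + f (n:ℤ) * g (⌊(n:ℝ)/c⌋ + (j:ℤ) + 1) : ℤ) : ℝ) / (n:ℝ))
      = (harmonic (y+1) : ℝ) + 1 + Int.fract (Int.fract c * ((j:ℝ)+1))
        - rho c j (y+2)/((y:ℝ)+1)
        - ∑ n ∈ Finset.range y, rho c j (n+2) / (((n:ℝ)+1)*((n:ℝ)+2)) := by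
    intro j hj
    have hj1 : 1 ≤ j := (Finset.mem_Icc.mp hj).1
    have h1 : ∀ n ∈ Finset.Icc 1 (y+1),
        ((q * f (n:ℤ) + f (n:ℤ) * g (⌊(n:ℝ)/c⌋ + (j:ℤ) + 1) : ℤ) : ℝ) / (n:ℝ)
        = 1/(n:ℝ) + (rho c j n - rho c j (n+1))/(n:ℝ) := by
      intro n hn
      have hn1 : 1 ≤ n := (Finset.mem_Icc.mp hn).1
      rw [step_eq c hc1 q f g hf hg j n hj1 hn1, Int.cast_sub,
        psi_real c q hq hcne j (n+1), psi_real c q hq hcne j n]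
      push_cast
      ring
    calc (∑ n ∈ Finset.Icc 1 (y+1), _)
        = ∑ n ∈ Finset.Icc 1 (y+1), (1/(n:ℝ) + (rho c j n - rho c j (n+1))/(n:ℝ)) :=
          Finset.sum_congr rfl h1
      _ = (∑ n ∈ Finset.Icc 1 (y+1), 1/(n:ℝ))
          + ∑ n ∈ Finset.Icc 1 (y+1), (rho c j n - rho c j (n+1))/(n:ℝ) :=
          Finset.sum_add_distrib
      _ = _ := by
          rw [harm_eq (y+1), abel_sum (rho c j) y, rho_one hc1 j]
          ring
  -- per-j error bound
  have hDj : ∀ j ∈ Finset.Icc 1 k,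
      |(∑ n ∈ Finset.Icc 1 (y+1),
          ((q * f (n:ℤ) + f (n:ℤ) * g (⌊(n:ℝ)/c⌋ + (j:ℤ) + 1) : ℤ) : ℝ) / (n:ℝ))
        - (1 + Real.log m + Real.log c + Real.eulerMascheroniConstant
            + Int.fract (Int.fract c * ((j:ℝ)+1))
            - ∑' n : ℕ, rho c j (n+2) / (((n:ℝ)+1) * ((n:ℝ)+2)))|
      ≤ (2*c+4)/(m:ℝ) := by
    intro j hj
    rw [hperj j hj]
    have hH := euler_bound (y+1) (by omega)
    push_cast at hH
    rw [abs_le] at hH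
    have hlmc : Real.log (m:ℝ) + Real.log c = Real.log ((m:ℝ)*c) :=
      (Real.log_mul (ne_of_gt hm0) hcne).symm
    have hlog1 : Real.log ((y:ℝ)+1) ≤ Real.log ((m:ℝ)*c) :=
      Real.log_le_log hy1 hylemc
    have hlog2 : Real.log ((m:ℝ)*c) - Real.log ((y:ℝ)+1) ≤ 1/((y:ℝ)+1) := by
      have h3 := Real.log_le_sub_one_of_pos (show (0:ℝ) < (m:ℝ)*c/((y:ℝ)+1) by positivity)
      rw [Real.log_div (by positivity) (ne_of_gt hy1)] at h3
      have e : (m:ℝ)*c/((y:ℝ)+1) - 1 = ((m:ℝ)*c - ((y:ℝ)+1))/((y:ℝ)+1) := by field_simp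
      have b : ((m:ℝ)*c - ((y:ℝ)+1))/((y:ℝ)+1) ≤ 1/((y:ℝ)+1) := by
        gcongr
        linarith
      linarith
    -- tail of the series
    have hsplit : (∑ i ∈ Finset.range y, rho c j (i+2) / (((i:ℝ)+1)*((i:ℝ)+2)))
        + (∑' i : ℕ, rho c j (i + y + 2) / (((((i + y : ℕ)):ℝ)+1) * ((((i + y : ℕ)):ℝ)+2)))
        = ∑' n : ℕ, rho c j (n+2) / (((n:ℝ)+1) * ((n:ℝ)+2)) :=
      Summable.sum_add_tsum_nat_add y (hsummable j)
    have hT0 : (0:ℝ) ≤ ∑' i : ℕ,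
        rho c j (i + y + 2) / (((((i + y : ℕ)):ℝ)+1) * ((((i + y : ℕ)):ℝ)+2)) :=
      tsum_nonneg fun i => div_nonneg (rho_nonneg hc0 _ _) (by positivity)
    have hsum2 : Summable (fun i : ℕ =>
        rho c j (i + y + 2) / (((((i + y : ℕ)):ℝ)+1) * ((((i + y : ℕ)):ℝ)+2))) :=
      (summable_nat_add_iff
        (f := fun n : ℕ => rho c j (n+2) / (((n:ℝ)+1) * ((n:ℝ)+2))) y).mpr (hsummable j)
    have hle1 : ∀ i : ℕ,
        rho c j (i + y + 2) / (((((i + y : ℕ)):ℝ)+1) * ((((i + y : ℕ)):ℝ)+2))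
        ≤ (c+1) * ((1:ℝ)/(((i:ℝ)+((y:ℝ)+1))*((i:ℝ)+((y:ℝ)+1)+1))) := by
      intro i
      have hd1 : (((i + y : ℕ)):ℝ) + 1 = (i:ℝ)+((y:ℝ)+1) := by push_cast; ring
      have hd2 : (((i + y : ℕ)):ℝ) + 2 = (i:ℝ)+((y:ℝ)+1)+1 := by push_cast; ring
      rw [hd1, hd2, mul_one_div]
      gcongr
      exact rho_le hc0 _ _
    have hAy : (1:ℝ) ≤ (y:ℝ)+1 := by
      have := Nat.cast_nonneg (α := ℝ) y; linarith
    have hGsum : Summable (fun i : ℕ =>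
        (c+1) * ((1:ℝ)/(((i:ℝ)+((y:ℝ)+1))*((i:ℝ)+((y:ℝ)+1)+1)))) :=
      (base_summable ((y:ℝ)+1) hAy).mul_left (c+1)
    have hTle : (∑' i : ℕ,
        rho c j (i + y + 2) / (((((i + y : ℕ)):ℝ)+1) * ((((i + y : ℕ)):ℝ)+2)))
        ≤ (c+1)/((y:ℝ)+1) := by
      refine (Summable.tsum_le_tsum hle1 hsum2 hGsum).trans ?_
      rw [tsum_mul_left]
      have h5 := base_tsum_le ((y:ℝ)+1) hAy
      have h6 := mul_le_mul_of_nonneg_left h5 (show (0:ℝ) ≤ c+1 by linarith)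
      rw [mul_one_div] at h6
      exact h6
    have hr0 : 0 ≤ rho c j (y+2)/((y:ℝ)+1) :=
      div_nonneg (rho_nonneg hc0 _ _) hy1.le
    have hr1 : rho c j (y+2)/((y:ℝ)+1) ≤ (c+1)/((y:ℝ)+1) := by
      gcongr
      exact rho_le hc0 _ _
    have hmono1 : 1/((y:ℝ)+1) ≤ 1/(m:ℝ) := by
      apply one_div_le_one_div_of_le hm0 hmy
    have hmono2 : (c+1)/((y:ℝ)+1) ≤ (c+1)/(m:ℝ) := by
      have h7 := mul_le_mul_of_nonneg_left hmono1 (show (0:ℝ) ≤ c+1 by linarith)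
      rw [mul_one_div, mul_one_div] at h7
      exact h7
    have hexp : (2*c+4)/(m:ℝ) = 1/(m:ℝ) + 1/(m:ℝ) + ((c+1)/(m:ℝ) + (c+1)/(m:ℝ)) := by
      ring
    rw [abs_le]
    constructor
    · linarith
    · linarith
  -- assemble
  rw [hxy, hLHS]
  simp only [hFeq]
  rw [← Finset.sum_sub_distrib]
  refine le_trans (Finset.abs_sum_le_sum_abs _ _) ?_
  refine le_trans (Finset.sum_le_sum hDj) ?_
  rw [Finset.sum_const, Nat.card_Icc, Nat.add_sub_cancel, nsmul_eq_mul]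
  apply le_of_eq
  ring
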